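/- Let B be a left semi-brace. Then E is an ideal of B if and only if a·b = g_a·g_b for all a, b ∈ B. -/
import Mathlib


/-- A left semi-brace: `(B,+)` is a left cancellative semigroup, `(B,*)` is a group
(whose identity `1` plays the role of `0` in the additive notation of the paper, and
`a⁻¹` plays the role of `a⁻`), and `a ∘ (b + c) = a ∘ b + a ∘ (a⁻ + c)` holds. -/
class LeftSemiBrace (B : Type*) extends Group B, Add B where
  add_assoc : ∀ a b c : B, a + b + c = a + (b + c)
  add_left_cancel : ∀ a b c : B, a + b = a + c → b = c
  circ_add : ∀ a b c : B, a * (b + c) = a * b + a * (a⁻¹ + c)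

namespace LeftSemiBrace

variable {B : Type*} [LeftSemiBrace B]

/-- The set `E` of additive idempotents. -/
def E (B : Type*) [LeftSemiBrace B] : Set B := {e | e + e = e}

/-- The set `G = B + 0`. -/
def G (B : Type*) [LeftSemiBrace B] : Set B := {x | ∃ b : B, x = b + 1}

/-- `λ_a (b) = a ∘ (a⁻ + b)`. -/
def lam (a b : B) : B := a * (a⁻¹ + b)

/-- `ρ_b (a) = (a⁻ + b)⁻ ∘ b`. -/
def rho (b a : B) : B := (a⁻¹ + b)⁻¹ * b

/-- `a · b = λ_a(a⁻) + a ∘ b + λ_b(b⁻)`. -/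
def dot (a b : B) : B := lam a a⁻¹ + a * b + lam b b⁻¹

/-- The group part `g_b = b + 0` of an element `b`. -/
def gp (b : B) : B := b + 1

/-- The additive inverse (within the group `(G,+)`) of the group part of an element:
for `g ∈ G` one has `neg g = -g`, since `-g_a = λ_a(a⁻) = a ∘ (a⁻ + a⁻)`. -/
def neg (a : B) : B := a * (a⁻¹ + a⁻¹)

/-- The idempotent part `e_b = -g_b + b` of an element `b`. -/
def ep (b : B) : B := neg (gp b) + b

/-- `S` is a subsemigroup of `(B,+)`. -/
def IsAddSubsemigroup (S : Set B) : Prop := ∀ x ∈ S, ∀ y ∈ S, x + y ∈ S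

/-- `S` is a subgroup of the multiplicative group `(B,∘)`. -/
def IsCircSubgroup (S : Set B) : Prop :=
  (1 : B) ∈ S ∧ (∀ x ∈ S, ∀ y ∈ S, x * y ∈ S) ∧ ∀ x ∈ S, x⁻¹ ∈ S

/-- `S` is a normal subgroup of the multiplicative group `(B,∘)`. -/
def IsCircNormal (S : Set B) : Prop :=
  IsCircSubgroup S ∧ ∀ x ∈ S, ∀ b : B, b * x * b⁻¹ ∈ S

/-- `S` is a subgroup of the group `(G,+)`. -/
def IsAddSubgroupOfG (S : Set B) : Prop :=
  S ⊆ G B ∧ (1 : B) ∈ S ∧ (∀ x ∈ S, ∀ y ∈ S, x + y ∈ S) ∧ ∀ x ∈ S, neg x ∈ S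

/-- `S` is a normal subgroup of the group `(G,+)`. -/
def IsAddNormalSubgroupOfG (S : Set B) : Prop :=
  IsAddSubgroupOfG S ∧ ∀ g ∈ G B, ∀ x ∈ S, g + x + neg g ∈ S

/-- `I` is an ideal of the left semi-brace `B` (Definition 17 of Catino–Colazzo–Stefanelli):
`I` is a subsemigroup of `(B,+)`, a normal subgroup of `(B,∘)`, `I ∩ G` is a normal
subgroup of `(G,+)`, `ρ_b(n) ∈ I` for all `b ∈ B`, `n ∈ I ∩ G`, and `λ_g(e) ∈ I` for all
`g ∈ G`, `e ∈ I ∩ E`. -/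
def IsIdeal (I : Set B) : Prop :=
  IsAddSubsemigroup I ∧ IsCircNormal I ∧ IsAddNormalSubgroupOfG (I ∩ G B) ∧
    (∀ b : B, ∀ n ∈ I ∩ G B, rho b n ∈ I) ∧
    (∀ g ∈ G B, ∀ e ∈ I ∩ E B, lam g e ∈ I)

/-- `I` is a left ideal of the left semi-brace `B`. -/
def IsLeftIdeal (I : Set B) : Prop :=
  (∀ x ∈ I, x + 1 ∈ I) ∧ IsAddSubgroupOfG (I ∩ G B) ∧
    (∀ g ∈ G B, ∀ x ∈ I, lam g x ∈ I) ∧ IsCircSubgroup I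

/-- The subgroup of `(G,+)` generated by a subset `S` of `G`. -/
def addClosure (S : Set B) : Set B :=
  ⋂₀ {T : Set B | S ⊆ T ∧ (1 : B) ∈ T ∧ (∀ x ∈ T, ∀ y ∈ T, x + y ∈ T) ∧ ∀ x ∈ T, neg x ∈ T}

/-- `X · Y`: the subgroup of `(G,+)` generated by `{x · y : x ∈ X, y ∈ Y}`. -/
def dotSet (X Y : Set B) : Set B := addClosure {z | ∃ x ∈ X, ∃ y ∈ Y, z = dot x y}

/-- `S + E = {s + e : s ∈ S, e ∈ E}`. -/
def addE (S : Set B) : Set B := {z | ∃ s ∈ S, ∃ e ∈ E B, z = s + e}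

/-- The right series of `B`: `rightSeries B n = B^(n+1)`, where `B^(1) = B` and
`B^(n+1) = B^(n) · B + E`. -/
def rightSeries (B : Type*) [LeftSemiBrace B] : ℕ → Set B
  | 0 => Set.univ
  | n + 1 => addE (dotSet (rightSeries B n) Set.univ)

/-- The left series of `B`: `leftSeries B n = B^(n+1)`, where `B^1 = B` and
`B^(n+1) = B · B^n + E`. -/
def leftSeries (B : Type*) [LeftSemiBrace B] : ℕ → Set B
  | 0 => Set.univ
  | n + 1 => addE (dotSet Set.univ (leftSeries B n))

/-- The right series of the skew left brace `G`: `rightSeriesG B n = G^(n+1)`, where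
`G^(1) = G` and `G^(n+1) = G^(n) · G`. -/
def rightSeriesG (B : Type*) [LeftSemiBrace B] : ℕ → Set B
  | 0 => G B
  | n + 1 => dotSet (rightSeriesG B n) (G B)

/-- The series `bracketSeries B n = B^[n+1]`, where `B^[1] = B` and `B^[n+1] = H_n + E`
with `H_n` the subgroup of `(G,+)` generated by `⋃_{i=1}^{n} B^[i] · B^[n+1-i]`. -/
def bracketSeries (B : Type*) [LeftSemiBrace B] : ℕ → Set B
  | 0 => Set.univ
  | n + 1 =>
      addE (addClosure (⋃ i : Fin (n + 1),
        dotSet (bracketSeries B i.1) (bracketSeries B (n - i.1))))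
  decreasing_by
  · exact i.isLt
  · exact Nat.lt_succ_of_le (Nat.sub_le n i.1)

/-- The socle `Soc(B) = {a ∈ B : ρ_a = ρ_0, λ_a = λ_0}`. -/
def Soc (B : Type*) [LeftSemiBrace B] : Set B :=
  {a | rho a = rho (1 : B) ∧ lam a = lam (1 : B)}

/-- The generalized socle `Zoc(B) = Soc(B) + E`. -/
def Zoc (B : Type*) [LeftSemiBrace B] : Set B :=
  {z | ∃ a ∈ Soc B, ∃ e ∈ E B, z = a + e}

/-- The lower central series of the group `(G,+)`:  `γ_1 = G` and `γ_{n+1}` is the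
subgroup of `(G,+)` generated by the additive commutators `-x - y + x + y` with
`x ∈ γ_n`, `y ∈ G`. -/
def lowerCentralSeriesG (B : Type*) [LeftSemiBrace B] : ℕ → Set B
  | 0 => G B
  | n + 1 => addClosure
      {z | ∃ x ∈ lowerCentralSeriesG B n, ∃ y ∈ G B, z = neg x + neg y + x + y}

/-- The group `(G,+)` is nilpotent. -/
def IsNilpotentGAdd (B : Type*) [LeftSemiBrace B] : Prop :=
  ∃ n : ℕ, lowerCentralSeriesG B n = {(1 : B)}

/- ### Auxiliary lemmas -/

private lemma aassoc (a b c : B) : a + b + c = a + (b + c) :=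
  LeftSemiBrace.add_assoc a b c

private lemma acancel {a b c : B} (h : a + b = a + c) : b = c :=
  LeftSemiBrace.add_left_cancel a b c h

lemma one_add' (a : B) : (1 : B) + a = a := by
  have h := circ_add (1 : B) 1 a
  simp only [one_mul, inv_one] at h
  exact (acancel h).symm

lemma lam_add' (a b c : B) : lam a (b + c) = lam a b + lam a c := by
  simp only [lam]
  rw [← aassoc]
  exact circ_add a (a⁻¹ + b) c

lemma mul_eq_add_lam (a b : B) : a * b = a + lam a b := by
  have h := circ_add a 1 b
  rw [one_add', mul_one] at h
  exact h

lemma lam_mul' (a b c : B) : lam (a * b) c = lam a (lam b c) := by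
  have h : b * (b⁻¹ * a⁻¹ + c) = a⁻¹ + lam b c := by
    have h2 := circ_add b (b⁻¹ * a⁻¹) c
    rw [h2, mul_inv_cancel_left]
    rfl
  simp only [lam, mul_inv_rev]
  rw [mul_assoc, h]
  rfl

lemma lam_one_apply (x : B) : lam 1 x = x := by
  simp only [lam, inv_one, one_mul, one_add']

lemma lam_inv_lam (a x : B) : lam a⁻¹ (lam a x) = x := by
  rw [← lam_mul', inv_mul_cancel, lam_one_apply]

lemma lam_lam_inv (a x : B) : lam a (lam a⁻¹ x) = x := by
  rw [← lam_mul', mul_inv_cancel, lam_one_apply]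

lemma neg_eq_lam (a : B) : neg a = lam a a⁻¹ := rfl

lemma add_neg' (a : B) : a + neg a = 1 := by
  have h := mul_eq_add_lam a a⁻¹
  rw [mul_inv_cancel] at h
  exact h.symm

lemma mem_E_iff {e : B} : e ∈ E B ↔ e + 1 = 1 := by
  constructor
  · intro he
    have he' : e + e = e := he
    have : e + (e + 1) = e + 1 := by rw [← aassoc, he']
    exact acancel this
  · intro h
    show e + e = e
    calc e + e = e + (1 + e) := by rw [one_add']
      _ = e + 1 + e := by rw [aassoc]
      _ = 1 + e := by rw [h]
      _ = e := one_add' e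

lemma mem_G_iff {g : B} : g ∈ G B ↔ g + 1 = g := by
  constructor
  · rintro ⟨b, rfl⟩
    rw [aassoc, one_add' (1 : B)]
  · intro h
    exact ⟨g, h.symm⟩

lemma E_add {e : B} (he : e ∈ E B) (x : B) : e + x = x := by
  have h1 := mem_E_iff.mp he
  calc e + x = e + (1 + x) := by rw [one_add']
    _ = e + 1 + x := by rw [aassoc]
    _ = 1 + x := by rw [h1]
    _ = x := one_add' x

lemma gp_add' (x y : B) : gp (x + y) = x + gp y := aassoc x y 1

lemma gp_add_E {f : B} (hf : f ∈ E B) (x : B) : gp (x + f) = gp x := by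
  rw [gp_add']
  show x + (f + 1) = gp x
  rw [mem_E_iff.mp hf]
  rfl

lemma add_eq_gp_add (x y : B) : x + y = gp x + y := by
  rw [gp, aassoc, one_add']

lemma one_mem_E : (1 : B) ∈ E B := show (1 : B) + 1 = 1 from one_add' 1

lemma gp_gp (a : B) : gp (gp a) = gp a := by
  rw [gp, gp, aassoc, one_add' (1 : B)]

lemma neg_gp (a : B) : neg (gp a) = neg a := by
  have h1 : gp a + neg (gp a) = 1 := add_neg' (gp a)
  have h2 : gp a + neg a = 1 := by
    rw [← add_eq_gp_add]; exact add_neg' a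
  exact acancel (h1.trans h2.symm)

lemma neg_add_gp (a : B) : neg a + gp a = 1 := by
  have h2 : gp a + neg a = 1 := by rw [← add_eq_gp_add]; exact add_neg' a
  have h : gp a + (neg a + gp a) = gp a + 1 := by
    rw [← aassoc, h2, one_add']
    exact (gp_gp a).symm
  exact acancel h

lemma neg_add_one (a : B) : neg a + 1 = neg a := by
  have h : neg a + 1 = neg a + (gp a + neg (gp a)) := by rw [add_neg' (gp a)]
  rw [h, ← aassoc, neg_gp a, neg_add_gp a, one_add']

lemma neg_mem_G (a : B) : neg a ∈ G B := mem_G_iff.mpr (neg_add_one a)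

lemma ep_mem_E (a : B) : ep a ∈ E B := by
  show ep a + ep a = ep a
  simp only [ep, neg_gp]
  calc neg a + a + (neg a + a) = neg a + (a + (neg a + a)) := aassoc _ _ _
    _ = neg a + (a + neg a + a) := by rw [← aassoc a (neg a) a]
    _ = neg a + (1 + a) := by rw [add_neg' a]
    _ = neg a + a := by rw [one_add']

lemma gp_add_ep (a : B) : gp a + ep a = a := by
  rw [ep, ← aassoc, add_neg' (gp a), one_add']

lemma lam_E {e : B} (he : e ∈ E B) (a : B) : lam a e ∈ E B := by
  show lam a e + lam a e = lam a e
  rw [← lam_add', E_add he]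

lemma lam_one_mem_E (a : B) : lam a 1 ∈ E B := by
  rw [mem_E_iff]
  calc lam a 1 + 1 = lam a 1 + lam a (lam a⁻¹ 1) := by rw [lam_lam_inv]
    _ = lam a (1 + lam a⁻¹ 1) := by rw [lam_add']
    _ = lam a (lam a⁻¹ 1) := by rw [one_add']
    _ = 1 := lam_lam_inv a 1

lemma gp_lam_gp (a x : B) : gp (lam a x) = gp (lam a (gp x)) := by
  conv_lhs => rw [← gp_add_ep x]
  rw [lam_add', gp_add_E (lam_E (ep_mem_E x) a)]

lemma dot_eq (a b : B) : dot a b = lam a b + neg b := by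
  have hneg : neg a + a = ep a := by rw [ep, neg_gp]
  calc dot a b = neg a + (a * b) + neg b := rfl
    _ = neg a + (a + lam a b) + neg b := by rw [mul_eq_add_lam]
    _ = neg a + a + lam a b + neg b := by rw [aassoc (neg a) a (lam a b)]
    _ = ep a + lam a b + neg b := by rw [hneg]
    _ = lam a b + neg b := by rw [E_add (ep_mem_E a)]

lemma mul_E_eq (b : B) {e : B} (he : e ∈ E B) (c : B) :
    b * e * c = b + lam b (lam e c) := by
  calc b * e * c = b * e + lam (b * e) c := mul_eq_add_lam _ _
    _ = b * e + lam b (lam e c) := by rw [lam_mul']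
    _ = b + lam b e + lam b (lam e c) := by rw [mul_eq_add_lam b e]
    _ = b + (lam b e + lam b (lam e c)) := aassoc _ _ _
    _ = b + lam b (lam e c) := by rw [E_add (lam_E he b)]

/-- Key consequence of normality of `E`: `g(λ_e(x)) = g(x)` for `e ∈ E`. -/
lemma gp_lam_of_normal (hN : ∀ x ∈ E B, ∀ b : B, b * x * b⁻¹ ∈ E B)
    {e : B} (he : e ∈ E B) (h : B) : gp (lam e h) = gp h := by
  have h1 : h⁻¹ * e * h ∈ E B := by
    have := hN e he h⁻¹
    rwa [inv_inv] at this
  rw [mul_E_eq h⁻¹ he h] at h1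
  have h2 : h⁻¹ + gp (lam h⁻¹ (lam e h)) = 1 := by
    rw [← gp_add']; exact mem_E_iff.mp h1
  have h3 : h⁻¹ + gp (lam h⁻¹ h) = 1 := by
    rw [← gp_add', ← mul_eq_add_lam]
    rw [inv_mul_cancel]
    exact one_add' 1
  have h4 : gp (lam h⁻¹ (lam e h)) = gp (lam h⁻¹ h) := acancel (h2.trans h3.symm)
  calc gp (lam e h) = gp (lam h (lam h⁻¹ (lam e h))) := by rw [lam_lam_inv]
    _ = gp (lam h (gp (lam h⁻¹ (lam e h)))) := gp_lam_gp _ _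
    _ = gp (lam h (gp (lam h⁻¹ h))) := by rw [h4]
    _ = gp (lam h (lam h⁻¹ h)) := (gp_lam_gp _ _).symm
    _ = gp h := by rw [lam_lam_inv]

/-- `E` is an ideal of `B` iff `a·b = g_a·g_b` for all `a, b ∈ B`. -/
theorem E_isIdeal_iff_dot_gp (B : Type*) [LeftSemiBrace B] :
    IsIdeal (E B) ↔ ∀ a b : B, dot a b = dot (gp a) (gp b) := by
  have neg_one : neg (1 : B) = 1 := by
    simp only [neg, inv_one, one_mul]; exact one_add' 1
  have hEG : ∀ x ∈ E B ∩ G B, x = (1 : B) := by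
    rintro x ⟨hx, hg⟩
    exact (mem_G_iff.mp hg).symm.trans (mem_E_iff.mp hx)
  have hone : (1 : B) ∈ E B ∩ G B := ⟨one_mem_E, mem_G_iff.mpr (one_add' 1)⟩
  constructor
  · -- E ideal implies dot a b = dot g_a g_b
    intro hI a b
    have hN : ∀ x ∈ E B, ∀ c : B, c * x * c⁻¹ ∈ E B := hI.2.1.2
    set e' : B := lam (gp a)⁻¹ (ep a) with he'def
    have he' : e' ∈ E B := lam_E (ep_mem_E a) _
    have hdec : gp a * e' = a := by
      rw [mul_eq_add_lam, he'def, lam_lam_inv, gp_add_ep]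
    have key : gp (lam a b) = gp (lam (gp a) (gp b)) := by
      calc gp (lam a b) = gp (lam (gp a * e') b) := by rw [hdec]
        _ = gp (lam (gp a) (lam e' b)) := by rw [lam_mul']
        _ = gp (lam (gp a) (gp (lam e' b))) := gp_lam_gp _ _
        _ = gp (lam (gp a) (gp b)) := by rw [gp_lam_of_normal hN he' b]
    rw [dot_eq, dot_eq, neg_gp, add_eq_gp_add (lam a b),
      add_eq_gp_add (lam (gp a) (gp b)), key]
  · -- dot condition implies E ideal
    intro h
    refine ⟨?_, ⟨⟨one_mem_E, ?_, ?_⟩, ?_⟩, ⟨⟨Set.inter_subset_right, hone, ?_, ?_⟩, ?_⟩,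
      ?_, ?_⟩
    · -- add subsemigroup
      intro x hx y hy
      rw [E_add hx]; exact hy
    · -- mul closed
      intro x hx y hy
      rw [mul_eq_add_lam, E_add hx]
      exact lam_E hy x
    · -- inv closed
      intro x hx
      have h1 : lam x x⁻¹ = 1 := by
        have := mul_eq_add_lam x x⁻¹
        rw [mul_inv_cancel, E_add hx] at this
        exact this.symm
      have h2 : x⁻¹ = lam x⁻¹ (1 : B) := by
        rw [← h1, lam_inv_lam]
      rw [h2]
      exact lam_one_mem_E x⁻¹
    · -- normality: the crucial part
      intro e he b
      have hgpbe : gp (b * e) = gp b := by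
        rw [mul_eq_add_lam, gp_add_E (lam_E he b)]
      have key1 : dot (b * e) b⁻¹ = dot b b⁻¹ := by
        rw [h (b * e) b⁻¹, h b b⁻¹, hgpbe]
      rw [dot_eq, dot_eq, lam_mul'] at key1
      -- key1 : lam b (lam e b⁻¹) + neg b⁻¹ = lam b b⁻¹ + neg b⁻¹
      have key2 : lam b (lam e b⁻¹) + neg b⁻¹ + gp b⁻¹ = lam b b⁻¹ + neg b⁻¹ + gp b⁻¹ := by
        rw [key1]
      rw [aassoc _ (neg b⁻¹) (gp b⁻¹), aassoc _ (neg b⁻¹) (gp b⁻¹), neg_add_gp b⁻¹] at key2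
      -- key2 : lam b (lam e b⁻¹) + 1 = lam b b⁻¹ + 1
      have key3 : gp (lam b (lam e b⁻¹)) = neg b := by
        have : lam b b⁻¹ + 1 = neg b := by rw [← neg_eq_lam, neg_add_one]
        exact key2.trans this
      rw [mem_E_iff, mul_E_eq b he b⁻¹]
      show gp (b + lam b (lam e b⁻¹)) = 1
      rw [gp_add', key3, add_neg']
    · -- E ∩ G closed under +
      intro x hx y hy
      rw [hEG x hx, hEG y hy, one_add']
      exact hone
    · -- E ∩ G closed under neg
      intro x hx
      rw [hEG x hx, neg_one]
      exact hone
    · -- E ∩ G normal in (G,+)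
      intro g hg x hx
      rw [hEG x hx, mem_G_iff.mp hg, add_neg']
      exact hone
    · -- rho condition
      intro b n hn
      rw [hEG n hn]
      show rho b 1 ∈ E B
      rw [rho, inv_one, one_add', inv_mul_cancel]
      exact one_mem_E
    · -- lam condition
      intro g _ e he
      exact lam_E he.1 g



end LeftSemiBrace
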